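/- arXiv:2602.16427 — 4 statements merged into one kernel-verified Lean document; each statement's English description precedes it below -/
import Mathlib

section
/- If a learner for a game type F equipped with a game semantics is step-bounded by b : 𝔻 → ℕ, then for every teacher (T, s₀, α) and every concept d ∈ 𝔻, the learner finds d within b(d) rounds (i.e., d is not still possible after b(d) rounds from the initial pair (q₀, s₀)). -/
/-! While `d` is allowed, the teacher's answers can only lead to states that still allow `d` and
have a strictly larger tick, and the tick of an allowing state stays below `b d`. Hence each round
in which `d` survives uses up one of at most `b d` available ticks. -/

open CategoryTheory

universe u

/-- `d` is still possible after `n` rounds from a state pair `(q, s)`: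
either `n = 0`, or the teacher's (semantically annotated) response to the
learner's query is a triple `((K, q'), s')` with `d ∈ K` and `d` still possible
after `n - 1` rounds from `(q', s')`. -/
def StillPossible {C T 𝔻 R : Type u} (F : Type u ⥤ Type u)
    (c : C → F.obj C)
    (sem : (X : Type u) → F.obj X → F.obj (Set 𝔻 × X))
    (α : (X : Type u) → F.obj X → T → (R ⊕ X × T))
    (d : 𝔻) : ℕ → C × T → Prop
  | 0, _ => True
  | n + 1, (q, s) =>
      ∃ (K : Set 𝔻) (q' : C) (s' : T),
        α (Set 𝔻 × C) (sem C (c q)) s = Sum.inr ((K, q'), s') ∧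
        d ∈ K ∧
        StillPossible F c sem α d n (q', s')

/-- By naturality, the teacher answers a query `F.map Subtype.val Z'` with the image of its answer
to `Z'`, so every continuation it returns satisfies `P`. -/
theorem mem_of_response_eq_inr {F : Type u ⥤ Type u} {T R : Type u}
    {α : (X : Type u) → F.obj X → T → (R ⊕ X × T)}
    (α_natural : ∀ (X Y : Type u) (f : X → Y) (Z : F.obj X) (s : T),
      α Y (F.map (TypeCat.ofHom f) Z) s = Sum.map id (Prod.map f id) (α X Z s))
    {X : Type u} {P : Set X} (Z' : F.obj P) {s s' : T} {x : X}
    (h : α X (F.map (TypeCat.ofHom Subtype.val) Z') s = Sum.inr (x, s')) : x ∈ P := by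
  rw [α_natural] at h
  rcases h' : α P Z' s with r | ⟨⟨y, hy⟩, t⟩ <;> rw [h'] at h
  · simp at h
  · simp only [Sum.map_inr, Prod.map, Sum.inr.injEq, Prod.mk.injEq] at h
    exact h.1 ▸ hy

theorem StillPossible.tick_add_lt {F : Type u ⥤ Type u} {C T 𝔻 R : Type u}
    {c : C → F.obj C} {sem : (X : Type u) → F.obj X → F.obj (Set 𝔻 × X)}
    {α : (X : Type u) → F.obj X → T → (R ⊕ X × T)}
    (α_natural : ∀ (X Y : Type u) (f : X → Y) (Z : F.obj X) (s : T),
      α Y (F.map (TypeCat.ofHom f) Z) s = Sum.map id (Prod.map f id) (α X Z s))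
    {b : 𝔻 → ℕ} {tick : C → ℕ} {allows : C → Set 𝔻}
    (h_tick : ∀ (q : C) (d : 𝔻), d ∈ allows q → tick q < b d)
    (h_step : ∀ (q : C) (d : 𝔻), d ∈ allows q →
      ∃ Z' : F.obj {p : Set 𝔻 × C // p ∈ {p : Set 𝔻 × C |
          d ∈ p.1 → d ∈ allows p.2 ∧ tick q < tick p.2}},
        F.map (TypeCat.ofHom Subtype.val) Z' = sem C (c q))
    {d : 𝔻} {n : ℕ} {q : C} {s : T}
    (hpossible : StillPossible F c sem α d n (q, s)) (hq : d ∈ allows q) :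
    tick q + n < b d := by
  induction n generalizing q s with
  | zero => exact h_tick q d hq
  | succ n ih =>
    obtain ⟨K, q', s', hresponse, hdK, hpossible'⟩ := hpossible
    obtain ⟨Z', hZ'⟩ := h_step q d hq
    rw [← hZ'] at hresponse
    obtain ⟨hq', htick⟩ : d ∈ allows q' ∧ tick q < tick q' :=
      mem_of_response_eq_inr α_natural Z' hresponse hdK
    have := ih hpossible' hq'
    omega

theorem learner_correct_general
    (F : Type u ⥤ Type u) (C T 𝔻 R : Type u)
    -- the learner
    (q₀ : C) (c : C → F.obj C)
    -- the game semantics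
    (sem : (X : Type u) → F.obj X → F.obj (Set 𝔻 × X))
    -- the teacher
    (s₀ : T)
    (α : (X : Type u) → F.obj X → T → (R ⊕ X × T))
    (α_natural : ∀ (X Y : Type u) (f : X → Y) (Z : F.obj X) (s : T),
      α Y (F.map (TypeCat.ofHom f) Z) s = Sum.map id (Prod.map f id) (α X Z s))
    -- the step-bound data
    (b : 𝔻 → ℕ)
    (tick : C → ℕ) (allows : C → Set 𝔻)
    (h_init : allows q₀ = Set.univ)
    (h_tick : ∀ (q : C) (d : 𝔻), d ∈ allows q → tick q < b d)
    (h_step : ∀ (q : C) (d : 𝔻), d ∈ allows q →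
      ∃ Z' : F.obj {p : Set 𝔻 × C // p ∈ {p : Set 𝔻 × C |
          d ∈ p.1 → d ∈ allows p.2 ∧ tick q < tick p.2}},
        F.map (TypeCat.ofHom Subtype.val) Z' = sem C (c q))
    (d : 𝔻) :
    ¬ StillPossible F c sem α d (b d) (q₀, s₀) := fun hpossible =>
  have := hpossible.tick_add_lt α_natural h_tick h_step (h_init ▸ Set.mem_univ d)
  by omega

/-- If a learner is step-bounded by `b : 𝔻 → ℕ`, then for every teacher and
every concept `d`, the learner finds `d` within `b d` rounds. -/
theorem learner_correct
    (F : Type u ⥤ Type u) (C T 𝔻 R : Type u)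
    -- the learner
    (q₀ : C) (c : C → F.obj C)
    -- the game semantics
    (sem : (X : Type u) → F.obj X → F.obj (Set 𝔻 × X))
    (sem_law : ∀ (X : Type u) (Z : F.obj X), F.map (TypeCat.ofHom (Prod.snd : Set 𝔻 × X → X)) (sem X Z) = Z)
    -- the teacher
    (s₀ : T)
    (α : (X : Type u) → F.obj X → T → (R ⊕ X × T))
    (α_natural : ∀ (X Y : Type u) (f : X → Y) (Z : F.obj X) (s : T),
      α Y (F.map (TypeCat.ofHom f) Z) s = Sum.map id (Prod.map f id) (α X Z s))
    -- the step-bound data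
    (b : 𝔻 → ℕ)
    (tick : C → ℕ) (allows : C → Set 𝔻)
    (h_init : allows q₀ = Set.univ)
    (h_tick : ∀ (q : C) (d : 𝔻), d ∈ allows q → tick q < b d)
    (h_step : ∀ (q : C) (d : 𝔻), d ∈ allows q →
      ∃ Z' : F.obj {p : Set 𝔻 × C // p ∈ {p : Set 𝔻 × C |
          d ∈ p.1 → d ∈ allows p.2 ∧ tick q < tick p.2}},
        F.map (TypeCat.ofHom Subtype.val) Z' = sem C (c q))
    (d : 𝔻) :
    ¬ StillPossible F c sem α d (b d) (q₀, s₀) :=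
  learner_correct_general F C T 𝔻 R q₀ c sem s₀ α α_natural b tick allows h_init h_tick h_step d
end

section
/- Let A be an alphabet with at least two distinct elements and let P : Polynomial ℕ be any polynomial. Then there exists a teacher for the restricted DFA learning game such that for every learner there exist n ∈ ℕ and a DFA M over A with state type Fin n such that M is still possible after P.eval n rounds. -/
/-- The type of DFAs over the alphabet `A`, with state type `Fin n` for some `n`. -/
abbrev DFAs (A : Type) : Type := Σ n : ℕ, DFA A (Fin n)

/-- `M` accepts the word `w`. -/
def Accepts {A : Type} (M : DFAs A) (w : List A) : Prop :=
  w ∈ M.2.accepts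

/-- A query of a learner in the restricted DFA learning game: either a
membership query `MQ w f`, or an equivalence query `EQ H q'` with a single
successor state `q'` (the teacher answers wrong hypotheses only by "no"). -/
inductive RQuery (A C : Type) : Type
  | MQ : List A → (Bool → C) → RQuery A C
  | EQ : DFAs A → C → RQuery A C

/-- In the restricted DFA learning game, the DFA `M` is still possible after
`n` rounds from the state pair `(q, s)`. -/
def RStillPossible {A C T : Type} (c : C → RQuery A C)
    (MQT : T × List A → Bool × T)
    (EQT : T × DFAs A → Option T)
    (M : DFAs A) : ℕ → C × T → Prop
  | 0, _ => True
  | n + 1, (q, s) =>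
      match c q with
      | RQuery.MQ w f =>
          ∃ (bit : Bool) (s' : T),
            MQT (s, w) = (bit, s') ∧
            (Accepts M w ↔ bit = true) ∧
            RStillPossible c MQT EQT M n (f bit, s')
      | RQuery.EQ H q' =>
          ∃ s' : T,
            EQT (s, H) = some s' ∧
            (∃ w : List A, ¬ (Accepts M w ↔ Accepts H w)) ∧
            RStillPossible c MQT EQT M n (q', s')

open Classical in
/-- The word corresponding to a bit vector `v`. -/
noncomputable def wordOf {A : Type} (a b : A) {m : ℕ} (v : Fin m → Bool) : List A :=
  List.ofFn (fun i => if v i then a else b)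

lemma wordOf_injective {A : Type} {a b : A} (hab : a ≠ b) {m : ℕ} :
    Function.Injective (wordOf a b (m := m)) := by
  intro v v' h
  have h2 := List.ofFn_injective h
  funext i
  have := congrFun h2 i
  by_cases hv : v i <;> by_cases hv' : v' i <;> simp [hv, hv'] at this ⊢ <;> tauto

open Classical in
/-- A DFA with `m + 2` states accepting exactly the word `wordOf a b v`. -/
noncomputable def mDFA {A : Type} (a b : A) {m : ℕ} (v : Fin m → Bool) : DFA A (Fin (m + 2)) where
  step := fun s x =>
    if h : (s : ℕ) < m then
      (if x = (if v ⟨s, h⟩ then a else b) then ⟨(s : ℕ) + 1, by omega⟩ else Fin.last (m + 1))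
    else Fin.last (m + 1)
  start := ⟨0, by omega⟩
  accept := {⟨m, by omega⟩}

lemma mDFA_evalFrom_dead {A : Type} (a b : A) {m : ℕ} (v : Fin m → Bool) (w : List A) :
    (mDFA a b v).evalFrom (Fin.last (m + 1)) w = Fin.last (m + 1) := by
  induction w with
  | nil => rfl
  | cons x w ih =>
      have hstep : (mDFA a b v).step (Fin.last (m + 1)) x = Fin.last (m + 1) := by
        simp [mDFA, Fin.last]
      show (mDFA a b v).evalFrom ((mDFA a b v).step (Fin.last (m + 1)) x) w = _
      rw [hstep, ih]

lemma mDFA_evalFrom {A : Type} (a b : A) {m : ℕ} (v : Fin m → Bool) (w : List A) :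
    ∀ (i : ℕ) (hi : i ≤ m),
      ((mDFA a b v).evalFrom ⟨i, by omega⟩ w = ⟨m, by omega⟩ ↔ w = (wordOf a b v).drop i) := by
  induction w with
  | nil =>
      intro i hi
      have hlen : (wordOf a b v).length = m := by simp [wordOf]
      constructor
      · intro h
        have : i = m := by simpa [Fin.ext_iff] using h
        subst this
        simp [List.drop_eq_nil_iff, hlen]
      · intro h
        have := congrArg List.length h
        simp [hlen] at this
        have : i = m := by omega
        subst this; rfl
  | cons x w ih =>
      intro i hi
      have hlen : (wordOf a b v).length = m := by simp [wordOf]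
      show (mDFA a b v).evalFrom ((mDFA a b v).step ⟨i, _⟩ x) w = _ ↔ _
      by_cases h : i < m
      · have hdrop : (wordOf a b v).drop i =
            (if v ⟨i, h⟩ then a else b) :: (wordOf a b v).drop (i + 1) := by
          rw [List.drop_eq_getElem_cons (by omega)]
          congr 1
          simp [wordOf]
        by_cases hx : x = (if v ⟨i, h⟩ then a else b)
        · have hstep : (mDFA a b v).step ⟨i, by omega⟩ x = ⟨i + 1, by omega⟩ := by
            simp [mDFA, h, hx]
          rw [hstep, ih (i + 1) (by omega), hdrop]
          simp [hx]
        · have hstep : (mDFA a b v).step ⟨i, by omega⟩ x = Fin.last (m + 1) := by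
            simp [mDFA, h, hx]
          rw [hstep, mDFA_evalFrom_dead]
          simp only [Fin.ext_iff, Fin.val_last, hdrop]
          constructor
          · intro hc; omega
          · intro hc; exact absurd (List.cons_eq_cons.mp hc).1 hx
      · have him : i = m := by omega
        have hstep : (mDFA a b v).step ⟨i, by omega⟩ x = Fin.last (m + 1) := by
          simp [mDFA, h]
        rw [hstep, mDFA_evalFrom_dead]
        simp only [Fin.ext_iff, Fin.val_last]
        constructor
        · intro hc; omega
        · intro hc
          rw [List.drop_eq_nil_iff.mpr (by omega)] at hc
          exact absurd hc (by simp)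

lemma mDFA_accepts {A : Type} (a b : A) {m : ℕ} (v : Fin m → Bool) (w : List A) :
    Accepts ⟨m + 2, mDFA a b v⟩ w ↔ w = wordOf a b v := by
  have := mDFA_evalFrom a b v w 0 (by omega)
  simp only [List.drop_zero] at this
  rw [← this]
  show w ∈ (mDFA a b v).accepts ↔ _
  rw [DFA.mem_accepts]
  show (mDFA a b v).evalFrom (mDFA a b v).start w ∈ ({⟨m, _⟩} : Set (Fin (m + 2))) ↔ _
  simp [mDFA, DFA.eval]

/-- The key counting lemma: eventually `c * (m+2)^d < 2^m`. -/
lemma exists_lt_two_pow (c d : ℕ) : ∃ m : ℕ, c * (m + 2) ^ d < 2 ^ m := by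
  have h := isLittleO_pow_const_const_pow_of_one_lt (R := ℝ) d (one_lt_two)
  have hε : (0 : ℝ) < 1 / ((c + 1) * 4) := by positivity
  have h2 := h.def hε
  rw [Filter.eventually_atTop] at h2
  obtain ⟨N, hN⟩ := h2
  refine ⟨N, ?_⟩
  have hkey := hN (N + 2) (by omega)
  have hnorm : ‖((N + 2 : ℕ) : ℝ) ^ d‖ = ((N + 2 : ℕ) : ℝ) ^ d :=
    Real.norm_of_nonneg (by positivity)
  have hnorm2 : ‖(2 : ℝ) ^ (N + 2)‖ = (2 : ℝ) ^ (N + 2) :=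
    Real.norm_of_nonneg (by positivity)
  rw [hnorm, hnorm2] at hkey
  have hc : (0 : ℝ) < (c : ℝ) + 1 := by positivity
  -- (N+2)^d ≤ 2^N / (c+1)
  have h3 : ((N + 2 : ℕ) : ℝ) ^ d ≤ (2 : ℝ) ^ N / ((c : ℝ) + 1) := by
    have : (1 : ℝ) / ((c + 1) * 4) * 2 ^ (N + 2) = 2 ^ N / ((c : ℝ) + 1) := by
      rw [pow_succ, pow_succ]; field_simp; ring
    calc ((N + 2 : ℕ) : ℝ) ^ d ≤ 1 / ((c + 1) * 4) * 2 ^ (N + 2) := hkey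
      _ = _ := this
  have h4 : (c : ℝ) * ((N + 2 : ℕ) : ℝ) ^ d < 2 ^ N := by
    calc (c : ℝ) * ((N + 2 : ℕ) : ℝ) ^ d ≤ (c : ℝ) * ((2 : ℝ) ^ N / ((c : ℝ) + 1)) := by
          apply mul_le_mul_of_nonneg_left h3 (by positivity)
      _ < 2 ^ N := by
          rw [mul_div_assoc']
          rw [div_lt_iff₀ hc]
          have h2N : (0 : ℝ) < 2 ^ N := by positivity
          nlinarith
  have : ((c * (N + 2) ^ d : ℕ) : ℝ) < ((2 ^ N : ℕ) : ℝ) := by push_cast; push_cast at h4; linarith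
  exact_mod_cast this

/-- Polynomial evaluation bound. -/
lemma poly_eval_le (P : Polynomial ℕ) (n : ℕ) (hn : 1 ≤ n) :
    P.eval n ≤ (∑ i ∈ Finset.range (P.natDegree + 1), P.coeff i) * n ^ P.natDegree := by
  rw [Polynomial.eval_eq_sum_range, Finset.sum_mul]
  apply Finset.sum_le_sum
  intro i hi
  simp only [Finset.mem_range] at hi
  exact Nat.mul_le_mul_left _ (Nat.pow_le_pow_right hn (by omega))

/-- For an alphabet with at least two elements and any polynomial `P`, there
is a teacher for the restricted DFA learning game such that for every learner
some DFA with state type `Fin n` is still possible after `P.eval n` rounds. -/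
theorem restricted_dfa_lower_bound
    {A : Type} (a b : A) (hab : a ≠ b)
    (P : Polynomial ℕ) :
    ∃ (T : Type) (s₀ : T)
      (MQT : T × List A → Bool × T)
      (EQT : T × DFAs A → Option T),
      ∀ (C : Type) (q₀ : C) (c : C → RQuery A C),
        ∃ (n : ℕ) (M : DFA A (Fin n)),
          RStillPossible c MQT EQT ⟨n, M⟩ (P.eval n) (q₀, s₀) := by
  classical
  refine ⟨Unit, (), fun _ => (false, ()), fun _ => some (), ?_⟩
  intro C q₀ c
  -- choose m large enough
  set cf := ∑ i ∈ Finset.range (P.natDegree + 1), P.coeff i with hcf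
  obtain ⟨m, hm⟩ := exists_lt_two_pow cf P.natDegree
  set k := P.eval (m + 2) with hk
  have hkbound : k < 2 ^ m :=
    lt_of_le_of_lt (poly_eval_le P (m + 2) (by omega)) hm
  -- the key invariant
  have key : ∀ (j : ℕ) (q : C), ∃ S : Finset (Fin m → Bool), S.card ≤ j ∧
      ∀ v ∉ S, RStillPossible c (fun _ => (false, ())) (fun _ => some ())
        ⟨m + 2, mDFA a b v⟩ j (q, ()) := by
    intro j
    induction j with
    | zero => intro q; exact ⟨∅, by simp, fun v _ => trivial⟩
    | succ j ih =>
        intro q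
        cases hc : c q with
        | MQ w f =>
            obtain ⟨S', hS'card, hS'⟩ := ih (f false)
            refine ⟨S' ∪ (if h : ∃ v, wordOf a b v = w then {h.choose} else ∅), ?_, ?_⟩
            · calc (S' ∪ _).card ≤ S'.card + _ := Finset.card_union_le _ _
                _ ≤ j + 1 := by
                    apply Nat.add_le_add hS'card
                    split <;> simp
            · intro v hv
              simp only [Finset.mem_union, not_or] at hv
              show RStillPossible _ _ _ _ (j + 1) (q, ())
              rw [RStillPossible, hc]
              refine ⟨false, (), rfl, ?_, hS' v hv.1⟩
              simp only [Bool.false_eq_true, iff_false]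
              rw [mDFA_accepts]
              intro hw
              have hex : ∃ v', wordOf a b v' = w := ⟨v, hw.symm⟩
              have := hex.choose_spec
              have hvv : hex.choose = v := wordOf_injective hab (by rw [this, hw])
              have := hv.2
              rw [dif_pos hex] at this
              simp [hvv] at this
        | EQ H q' =>
            obtain ⟨S', hS'card, hS'⟩ := ih q'
            refine ⟨S' ∪ (if h : ∃ v, ∀ w, Accepts H w ↔ w = wordOf a b v
                then {h.choose} else ∅), ?_, ?_⟩
            · calc (S' ∪ _).card ≤ S'.card + _ := Finset.card_union_le _ _
                _ ≤ j + 1 := by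
                    apply Nat.add_le_add hS'card
                    split <;> simp
            · intro v hv
              simp only [Finset.mem_union, not_or] at hv
              show RStillPossible _ _ _ _ (j + 1) (q, ())
              rw [RStillPossible, hc]
              refine ⟨(), rfl, ?_, hS' v hv.1⟩
              by_contra hcon
              push_neg at hcon
              have hall : ∀ w, Accepts H w ↔ w = wordOf a b v := fun w => by
                rw [← hcon w]; exact mDFA_accepts a b v w
              have hex : ∃ v', ∀ w, Accepts H w ↔ w = wordOf a b v' := ⟨v, hall⟩
              have hspec := hex.choose_spec
              have hvv : hex.choose = v := by
                apply wordOf_injective hab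
                have h1 : Accepts H (wordOf a b v) := (hall _).mpr rfl
                exact ((hspec _).mp h1).symm
              have := hv.2
              rw [dif_pos hex] at this
              simp [hvv] at this
  obtain ⟨S, hScard, hS⟩ := key k q₀
  have : ∃ v : Fin m → Bool, v ∉ S := by
    by_contra hcon
    push_neg at hcon
    have : S = Finset.univ := Finset.eq_univ_iff_forall.mpr hcon
    rw [this] at hScard
    simp [Finset.card_univ] at hScard
    omega
  obtain ⟨v, hv⟩ := this
  exact ⟨m + 2, mDFA a b v, hS v hv⟩
end

section
/- Let W = {too-high, too-low} and let T be a type. Let F and M_T be the functors from the product category (Type u) × (Type u) to Type u given on objects by F(R, X) = ℕ × R × (W → X) and M_T(R, X) = T → (R ⊕ X × T) (with the evident action on morphisms). Then the map sending a natural transformation α : F ⟶ M_T to the function δ : T × ℕ → Unit ⊕ (W × T) defined by δ(t, n) = α.app (Unit, W) (n, (), id_W) t is a bijection between natural transformations F ⟶ M_T and functions T × ℕ → Unit ⊕ (W × T). -/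
/-!
`FGame (R, X) = ℕ × R × (W → X)` is the coproduct over `ℕ` of the functors represented by
`(Unit, W)`, the generic element being `(n, (), id)`. By the Yoneda lemma a natural
transformation `FGame ⟶ MGame T` is therefore determined by, and freely given by, its values on
these generic elements, i.e. by a family `ℕ → MGame T (Unit, W) = ℕ → T → Unit ⊕ W × T`.
-/

open CategoryTheory

/-- The two possible wrong-guess answers of the teacher. -/
inductive W : Type
  | tooHigh : W
  | tooLow : W
  deriving DecidableEq

/-- The game type of the natural number guessing game:
`F (R, X) = ℕ × R × (W → X)`. -/
def FGame : Type × Type ⥤ Type where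
  obj P := ℕ × P.1 × (W → P.2)
  map f := TypeCat.ofHom fun x => (x.1, f.1 x.2.1, fun w => f.2 (x.2.2 w))

/-- The teacher functor `M_T (R, X) = T → (R ⊕ X × T)`. -/
def MGame (T : Type) : Type × Type ⥤ Type where
  obj P := T → (P.1 ⊕ P.2 × T)
  map f := TypeCat.ofHom fun g t => Sum.map f.1 (Prod.map f.2 id) (g t)
  map_id := by
    intro P
    ext g t
    dsimp
    cases g t <;> rfl
  map_comp := by
    intro P Q S f g
    ext h t
    dsimp
    cases h t <;> rfl

namespace MGame

variable {T : Type}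

def ofTransition (δ : T × ℕ → Unit ⊕ W × T) : FGame ⟶ MGame T where
  app P := TypeCat.ofHom fun (x : ℕ × P.1 × (W → P.2)) t =>
    Sum.map (fun _ => x.2.1) (Prod.map x.2.2 id) (δ (t, x.1))
  naturality P Q f := by
    ext x
    funext t
    show Sum.map _ _ (δ (t, x.1)) = Sum.map _ _ (Sum.map _ _ (δ (t, x.1)))
    cases δ (t, x.1) <;> rfl

/-- Naturality along the morphism `(Unit, W) ⟶ P` picking out `r` and `f`. -/
lemma app_eq_map_app_generic (α : FGame ⟶ MGame T) {P : Type × Type}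
    (n : ℕ) (r : P.1) (f : W → P.2) (t : T) :
    α.app P (n, r, f) t = Sum.map (fun _ => r) (Prod.map f id) (α.app (Unit, W) (n, (), id) t) := by
  have hα := α.naturality
    ((TypeCat.ofHom fun _ => r, TypeCat.ofHom f) : ((Unit, W) : Type × Type) ⟶ P)
  have h := congrFun (ConcreteCategory.congr_hom hα ((n, (), id) : FGame.obj (Unit, W))) t
  simp only [FGame, prod_Hom, MGame, TypeCat.hom_ofHom, TypeCat.Fun.coe_mk] at h
  exact h

variable (T) in
def equivTransition : (FGame ⟶ MGame T) ≃ (T × ℕ → Unit ⊕ W × T) where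
  toFun α p := α.app (Unit, W) (p.2, (), id) p.1
  invFun := ofTransition
  left_inv α := by
    ext P ⟨n, r, f⟩
    funext t
    exact (app_eq_map_app_generic α n r f t).symm
  right_inv δ := by
    funext p
    show Sum.map _ _ (δ (p.1, p.2)) = δ p
    cases δ p <;> rfl

end MGame

/-- Teachers in the generic sense (natural transformations `F ⟶ M_T`)
correspond bijectively to maps `δ : T × ℕ → Unit ⊕ (W × T)`,
via `δ (t, n) = α.app (Unit, W) (n, (), id) t`. -/
theorem nat_teacher_characterization (T : Type) :
    Function.Bijective
      (fun α : FGame ⟶ MGame T =>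
        (fun p : T × ℕ => α.app (Unit, W) (p.2, (), id) p.1 :
          T × ℕ → Unit ⊕ W × T)) :=
  (MGame.equivTransition T).bijective
end

section
/- Fix an input alphabet A and an output alphabet O, let Mealy := Σ k, (Fin k × (Fin k → A → O × Fin k)) be the type of Mealy machines over A and O (a number of states, a start state, and a step function), and let T be a type. Let F and M_T be the functors from the product category (Type u) × (Type u) to Type u given on objects by F(R, X) = (Σ n : ℕ, (Fin n → A) × ((Fin n → O) → X)) ⊕ (Mealy × R × (List A → X)) and M_T(R, X) = T → (R ⊕ X × T) (with the evident action on morphisms). Then there is a bijection between natural transformations α : F ⟶ M_T and pairs consisting of a family of functions MQᵀ_n : T × (Fin n → A) → (Fin n → O) × T (for every n ∈ ℕ) together with a function EQᵀ : T × Mealy → Option (List A × T). -/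
open CategoryTheory

/-- The type of Mealy machines over input alphabet `A` and output alphabet `O`:
a number of states `k`, a start state, and a step function. -/
abbrev Mealy (A O : Type) : Type :=
  Σ k : ℕ, Fin k × (Fin k → A → O × Fin k)

/-- The game type of Mealy machine learning:
`F (R, X) = (Σ n, (Fin n → A) × ((Fin n → O) → X)) ⊕ (Mealy × R × (List A → X))`,
where the left summand encodes output queries (whose answers are output words
of matching length) and the right summand encodes equivalence queries. -/
def FMealy (A O : Type) : Type × Type ⥤ Type where
  obj P :=
    (Σ n : ℕ, (Fin n → A) × ((Fin n → O) → P.2)) ⊕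
      (Mealy A O × P.1 × (List A → P.2))
  map f :=
    TypeCat.ofHom (Sum.map
      (fun x => ⟨x.1, x.2.1, fun v => f.2 (x.2.2 v)⟩)
      (fun x => (x.1, f.1 x.2.1, fun w => f.2 (x.2.2 w))))
  map_id := by
    intro P
    ext x
    cases x <;> rfl
  map_comp := by
    intro P Q S f g
    ext x
    cases x <;> rfl

/-! By naturality, a transformation `α : F ⟶ M_T` is determined by its values on the two
generic queries: the output query of a word `a` with the identity continuation at
`(Empty, Fin n → O)`, and the equivalence query of a machine with the identity continuation at
`(Unit, List A)`; any other query is the image of one of these under a morphism of `Type × Type`.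
Since the result component of the first is `Empty`, the teacher can only answer it with an
output word and a new state; in the second, the result `()` plays the role of `none`. -/

namespace MealyTeacher

variable {A O T : Type}

def outputQuery (α : FMealy A O ⟶ MGame T) (n : ℕ) (ta : T × (Fin n → A)) : (Fin n → O) × T :=
  (α.app (Empty, Fin n → O) (Sum.inl ⟨n, ta.2, id⟩) ta.1).elim Empty.elim id

def equivalenceQuery (α : FMealy A O ⟶ MGame T) (tm : T × Mealy A O) : Option (List A × T) :=
  (α.app (Unit, List A) (Sum.inr (tm.2, (), id)) tm.1).getRight?

def ofQueries (q : ∀ n : ℕ, T × (Fin n → A) → (Fin n → O) × T)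
    (e : T × Mealy A O → Option (List A × T)) : FMealy A O ⟶ MGame T where
  app P := TypeCat.ofHom fun x t => match x with
    | Sum.inl ⟨n, a, k⟩ => Sum.inr (Prod.map k id (q n (t, a)))
    | Sum.inr (m, r, k) => (e (t, m)).elim (Sum.inl r) fun wt => Sum.inr (Prod.map k id wt)
  naturality P Q f := by
    ext (⟨n, a, k⟩ | ⟨m, r, k⟩)
    · rfl
    · funext t
      dsimp [FMealy, MGame]
      cases e (t, m) <;> rfl

theorem app_inl_eq_map (α : FMealy A O ⟶ MGame T) (P : Type × Type) (n : ℕ) (a : Fin n → A)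
    (k : (Fin n → O) → P.2) (t : T) :
    α.app P (Sum.inl ⟨n, a, k⟩) t =
      Sum.map Empty.elim (Prod.map k id) (α.app (Empty, Fin n → O) (Sum.inl ⟨n, a, id⟩) t) :=
  congrFun (NatTrans.naturality_apply (FD := fun X Y => TypeCat.Fun X Y) (CD := fun X => X) α
    ((TypeCat.ofHom Empty.elim, TypeCat.ofHom k) : (Empty, Fin n → O) ⟶ P) (Sum.inl ⟨n, a, id⟩)) t

theorem app_inr_eq_map (α : FMealy A O ⟶ MGame T) (P : Type × Type) (m : Mealy A O) (r : P.1)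
    (k : List A → P.2) (t : T) :
    α.app P (Sum.inr (m, r, k)) t =
      Sum.map (fun _ => r) (Prod.map k id) (α.app (Unit, List A) (Sum.inr (m, (), id)) t) :=
  congrFun (NatTrans.naturality_apply (FD := fun X Y => TypeCat.Fun X Y) (CD := fun X => X) α
    ((TypeCat.ofHom fun _ => r, TypeCat.ofHom k) : (Unit, List A) ⟶ P) (Sum.inr (m, (), id))) t

theorem app_inl_eq_outputQuery (α : FMealy A O ⟶ MGame T) (P : Type × Type) (n : ℕ)
    (a : Fin n → A) (k : (Fin n → O) → P.2) (t : T) :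
    α.app P (Sum.inl ⟨n, a, k⟩) t = Sum.inr (Prod.map k id (outputQuery α n (t, a))) := by
  rw [app_inl_eq_map, outputQuery]
  rcases α.app (Empty, Fin n → O) (Sum.inl ⟨n, a, id⟩) t with e | p
  · exact e.elim
  · rfl

theorem app_inr_eq_equivalenceQuery (α : FMealy A O ⟶ MGame T) (P : Type × Type)
    (m : Mealy A O) (r : P.1) (k : List A → P.2) (t : T) :
    α.app P (Sum.inr (m, r, k)) t =
      (equivalenceQuery α (t, m)).elim (Sum.inl r) fun wt => Sum.inr (Prod.map k id wt) := by
  rw [app_inr_eq_map, equivalenceQuery]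
  rcases α.app (Unit, List A) (Sum.inr (m, (), id)) t with u | p <;> rfl

theorem ofQueries_outputQuery_equivalenceQuery (α : FMealy A O ⟶ MGame T) :
    ofQueries (outputQuery α) (equivalenceQuery α) = α := by
  ext P (⟨n, a, k⟩ | ⟨m, r, k⟩) <;> funext t
  · exact (app_inl_eq_outputQuery α P n a k t).symm
  · exact (app_inr_eq_equivalenceQuery α P m r k t).symm

theorem outputQuery_ofQueries (q : ∀ n : ℕ, T × (Fin n → A) → (Fin n → O) × T)
    (e : T × Mealy A O → Option (List A × T)) : outputQuery (ofQueries q e) = q :=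
  rfl

theorem equivalenceQuery_ofQueries (q : ∀ n : ℕ, T × (Fin n → A) → (Fin n → O) × T)
    (e : T × Mealy A O → Option (List A × T)) : equivalenceQuery (ofQueries q e) = e := by
  funext tm
  change (Option.elim (e tm) (Sum.inl ()) fun wt => Sum.inr (Prod.map id id wt)).getRight? = e tm
  cases e tm <;> rfl

def equivQueries : (FMealy A O ⟶ MGame T) ≃
    (∀ n : ℕ, T × (Fin n → A) → (Fin n → O) × T) × (T × Mealy A O → Option (List A × T)) where
  toFun α := (outputQuery α, equivalenceQuery α)
  invFun qe := ofQueries qe.1 qe.2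
  left_inv := ofQueries_outputQuery_equivalenceQuery
  right_inv qe := Prod.ext (outputQuery_ofQueries qe.1 qe.2) (equivalenceQuery_ofQueries qe.1 qe.2)

end MealyTeacher

/-- Teachers in the generic sense (natural transformations `F ⟶ M_T`) for the
Mealy learning game type correspond bijectively to pairs consisting of a
family of output query maps `MQᵀ_n : T × (Fin n → A) → (Fin n → O) × T` and an
equivalence query map `EQᵀ : T × Mealy → Option (List A × T)`. -/
theorem mealy_teacher_characterization (A O T : Type) :
    Nonempty
      ((FMealy A O ⟶ MGame T) ≃
        ((∀ n : ℕ, T × (Fin n → A) → (Fin n → O) × T) ×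
          (T × Mealy A O → Option (List A × T)))) :=
  ⟨MealyTeacher.equivQueries⟩
end
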